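/- Let G = (V,E) be a finite simple undirected graph in which every vertex has positive degree, and F ∈ ℕ₊. On a probability space, let X : V → ℝ^F be a random matrix whose entries X_{k,i} are jointly independent and identically distributed with mean 0 and variance 1/F. Define the rescaled vectors h̃_k = (1/√d_k) · X_k and the aggregates g_w = Σ_{k ∈ N(w)} h̃_k. Then for every pair of vertices (u, v) ∈ V × V, E[g_u · g_v] = RA(u,v) = Σ_{k ∈ N(u) ∩ N(v)} 1/d_k, the Resource Allocation index of (u,v). -/

import Mathlib

/-!
Expanding both aggregates, `E[g_u i * g_v i]` is a double sum over `k ∈ N(u)`, `l ∈ N(v)` of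
`E[X_{k,i} X_{l,i}] / (√d_k √d_l)`. Independence and zero mean kill every term with `k ≠ l`, and
each diagonal term contributes `(1/d_k) * (1/F)`; summing over the `F` coordinates gives `RA(u,v)`.
-/

open MeasureTheory ProbabilityTheory Finset

section CenteredIndependent

variable {Ω ι : Type*} [MeasurableSpace Ω] {μ : Measure Ω} {Y : ι → Ω → ℝ}

theorem memLp_two_of_integral_sq_ne_zero {f : Ω → ℝ} (hf : AEStronglyMeasurable f μ)
    (h : ∫ ω, f ω ^ 2 ∂μ ≠ 0) : MemLp f 2 μ :=
  (memLp_two_iff_integrable_sq hf).2 (Integrable.of_integral_ne_zero h)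

theorem integral_mul_eq_ite_of_pairwise_indepFun [DecidableEq ι]
    (hY : ∀ a, MemLp (Y a) 2 μ) (hindep : Pairwise fun a b => IndepFun (Y a) (Y b) μ)
    (hmean : ∀ a, ∫ ω, Y a ω ∂μ = 0) (a b : ι) :
    ∫ ω, Y a ω * Y b ω ∂μ = if a = b then ∫ ω, Y a ω ^ 2 ∂μ else 0 := by
  split_ifs with hab
  · simp_rw [hab, sq]
  · calc ∫ ω, Y a ω * Y b ω ∂μ = (∫ ω, Y a ω ∂μ) * ∫ ω, Y b ω ∂μ :=
          (hindep hab).integral_mul_eq_mul_integral (hY a).1 (hY b).1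
      _ = 0 := by rw [hmean a, zero_mul]

theorem integrable_sum_mul_sum (hY : ∀ a, MemLp (Y a) 2 μ) (s t : Finset ι) (c d : ι → ℝ) :
    Integrable (fun ω => (∑ a ∈ s, c a * Y a ω) * (∑ b ∈ t, d b * Y b ω)) μ :=
  (memLp_finsetSum s fun a _ => (hY a).const_mul (c a)).integrable_mul
    (memLp_finsetSum t fun b _ => (hY b).const_mul (d b))

theorem integral_sum_mul_sum_of_pairwise_indepFun [DecidableEq ι]
    (hY : ∀ a, MemLp (Y a) 2 μ) (hindep : Pairwise fun a b => IndepFun (Y a) (Y b) μ)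
    (hmean : ∀ a, ∫ ω, Y a ω ∂μ = 0) (s t : Finset ι) (c d : ι → ℝ) :
    ∫ ω, (∑ a ∈ s, c a * Y a ω) * (∑ b ∈ t, d b * Y b ω) ∂μ =
      ∑ a ∈ s ∩ t, c a * d a * ∫ ω, Y a ω ^ 2 ∂μ := by
  have hprod (a b : ι) : Integrable (fun ω => Y a ω * Y b ω) μ := (hY a).integrable_mul (hY b)
  calc ∫ ω, (∑ a ∈ s, c a * Y a ω) * (∑ b ∈ t, d b * Y b ω) ∂μ
      = ∑ a ∈ s, ∑ b ∈ t, c a * d b * ∫ ω, Y a ω * Y b ω ∂μ := by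
        have hexpand (ω : Ω) : (∑ a ∈ s, c a * Y a ω) * (∑ b ∈ t, d b * Y b ω) =
            ∑ a ∈ s, ∑ b ∈ t, c a * d b * (Y a ω * Y b ω) := by
          rw [sum_mul_sum]
          exact sum_congr rfl fun a _ => sum_congr rfl fun b _ => by ring
        simp_rw [hexpand]
        rw [integral_finsetSum _ fun a _ =>
          integrable_finsetSum _ fun b _ => (hprod a b).const_mul (c a * d b)]
        refine sum_congr rfl fun a _ => ?_
        rw [integral_finsetSum _ fun b _ => (hprod a b).const_mul (c a * d b)]
        simp_rw [integral_const_mul]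
    _ = ∑ a ∈ s ∩ t, c a * d a * ∫ ω, Y a ω ^ 2 ∂μ := by
        simp_rw [integral_mul_eq_ite_of_pairwise_indepFun hY hindep hmean, mul_ite, mul_zero,
          sum_ite_eq, sum_ite_mem]

end CenteredIndependent

theorem rescaled_message_passing_expected_inner_product_eq_resourceAllocation_general
    {V : Type*} [Fintype V] [DecidableEq V]
    (G : SimpleGraph V) [DecidableRel G.Adj]
    {Ω : Type*} [MeasureSpace Ω]
    (F : ℕ) (hF : 0 < F)
    (X : V → Fin F → Ω → ℝ)
    (hXmeas : ∀ k i, Measurable (X k i))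
    -- the entries of `X` are jointly independent
    (hXindep : iIndepFun
      (fun (p : V × Fin F) ω => X p.1 p.2 ω) ℙ)
    -- with mean `0` and variance `1/F`
    (hXmean : ∀ k i, ∫ ω, X k i ω = 0)
    (hXvar : ∀ k i, ∫ ω, (X k i ω) ^ 2 = 1 / F)
    -- rescaled vectors and aggregates
    (htilde : V → Ω → Fin F → ℝ)
    (hht : ∀ k ω i, htilde k ω i = (1 / Real.sqrt (G.degree k)) * X k i ω)
    (g : V → Ω → Fin F → ℝ)
    (hg : ∀ w ω i, g w ω i = ∑ k ∈ G.neighborFinset w, htilde k ω i)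
    (u v : V) :
    ∫ ω, ∑ i : Fin F, g u ω i * g v ω i =
      ∑ k ∈ G.neighborFinset u ∩ G.neighborFinset v, 1 / (G.degree k : ℝ) := by
  have hF0 : (F : ℝ) ≠ 0 := by positivity
  have hL2 (k i) : MemLp (X k i) 2 ℙ :=
    memLp_two_of_integral_sq_ne_zero (hXmeas k i).aestronglyMeasurable (by simp [hXvar, hF0])
  have hindep (i : Fin F) : Pairwise fun k l => IndepFun (X k i) (X l i) ℙ := fun k l hkl =>
    hXindep.indepFun (i := (k, i)) (j := (l, i)) (by simpa using hkl)
  have hgX (w ω i) : g w ω i = ∑ k ∈ G.neighborFinset w, 1 / √(G.degree k) * X k i ω := by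
    simp only [hg, hht]
  simp_rw [hgX]
  rw [integral_finsetSum _ fun i _ => integrable_sum_mul_sum (hL2 · i) _ _ _ _]
  simp_rw [integral_sum_mul_sum_of_pairwise_indepFun (fun k => hL2 k _) (hindep _)
    (fun k => hXmean k _), hXvar]
  rw [sum_const, card_univ, Fintype.card_fin, nsmul_eq_mul, mul_sum]
  refine sum_congr rfl fun k _ => ?_
  rw [one_div_mul_one_div, Real.mul_self_sqrt (Nat.cast_nonneg _)]
  field_simp

/-- Resource Allocation estimator.  In a graph where every vertex has
positive degree, with i.i.d. mean-`0`, variance-`1/F` entries, rescaled vectors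
`h̃_k = (1/√d_k) • X_k` and aggregates `g_w = ∑_{k ∈ N(w)} h̃_k`, for every pair of vertices
`(u, v)`, `E[g_u ⬝ g_v] = RA(u,v) = ∑_{k ∈ N(u) ∩ N(v)} 1/d_k`. -/
theorem rescaled_message_passing_expected_inner_product_eq_resourceAllocation
    {V : Type*} [Fintype V] [DecidableEq V]
    (G : SimpleGraph V) [DecidableRel G.Adj]
    (hdeg : ∀ w : V, 0 < G.degree w)
    {Ω : Type*} [MeasureSpace Ω] [IsProbabilityMeasure (ℙ : Measure Ω)]
    (F : ℕ) (hF : 0 < F)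
    (X : V → Fin F → Ω → ℝ)
    (hXmeas : ∀ k i, Measurable (X k i))
    -- the entries of `X` are jointly independent
    (hXindep : iIndepFun
      (fun (p : V × Fin F) ω => X p.1 p.2 ω) ℙ)
    -- and identically distributed
    (hXid : ∀ (p q : V × Fin F), IdentDistrib (X p.1 p.2) (X q.1 q.2) ℙ ℙ)
    -- with mean `0` and variance `1/F`
    (hXmean : ∀ k i, ∫ ω, X k i ω = 0)
    (hXvar : ∀ k i, ∫ ω, (X k i ω) ^ 2 = 1 / F)
    -- rescaled vectors and aggregates
    (htilde : V → Ω → Fin F → ℝ)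
    (hht : ∀ k ω i, htilde k ω i = (1 / Real.sqrt (G.degree k)) * X k i ω)
    (g : V → Ω → Fin F → ℝ)
    (hg : ∀ w ω i, g w ω i = ∑ k ∈ G.neighborFinset w, htilde k ω i)
    (u v : V) :
    ∫ ω, ∑ i : Fin F, g u ω i * g v ω i =
      ∑ k ∈ G.neighborFinset u ∩ G.neighborFinset v, 1 / (G.degree k : ℝ) :=
  rescaled_message_passing_expected_inner_product_eq_resourceAllocation_general G F hF X hXmeas
    hXindep hXmean hXvar htilde hht g hg u v
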